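/- Pooled allocation preservation: if (Γ, X, Φ) is well-formed, Φ(ys) = π·πs with π ≠ none, X(π) = (L, πs', κ₀..κₙ) strongly agrees with its layout type, and layout L for class C has clusters fs₀..fsₙ, then the heap obtained by appending null^|fsᵢ| to each κᵢ is well-formed, and the new location (π, |κ₀|) weakly agrees with C<Φ(ys)>. -/

import Mathlib

namespace Shapes

abbrev FieldId := ℕ
abbrev VarId := ℕ
abbrev ClassId := ℕ
abbrev LayoutId := ℕ
abbrev MethodId := ℕ

/-- A pool address: `none` is the global none-pool, `some n` a heap pool address. -/
abbrev PoolAddr := Option ℕ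

inductive Value where
  | null
  | obj (ω : ℕ)
  | loc (π : ℕ) (n : ℕ)
deriving DecidableEq

/-- A pool variable: `none` is the `none` keyword. -/
abbrev PoolVar := Option VarId

inductive RVal where
  | val (v : Value)
  | pool (π : PoolAddr)
deriving DecidableEq

abbrev Frame := VarId → Option RVal

/-- The value of a pool variable in a frame. -/
def poolOf (Φ : Frame) : PoolVar → Option PoolAddr
  | none => some none
  | some y => match Φ y with
    | some (RVal.pool π) => some π
    | _ => none

structure Obj where
  cls : ClassId
  params : List PoolAddr
  record : List Value

structure Pool where
  layout : LayoutId
  params : List PoolAddr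
  clusters : List (List (List Value))

abbrev Heap := ℕ → Option (Obj ⊕ Pool)

inductive Expr where
  | null
  | var (x : VarId)
  | newE (C : ClassId) (ys : List PoolVar)
  | call (x : VarId) (m : MethodId) (x' : VarId)
  | read (x : VarId) (f : FieldId)
  | write (x : VarId) (f : FieldId) (x' : VarId)
  | assign (x : VarId) (e : Expr)

structure MethodDecl where
  param : VarId
  paramTy : ClassId × List PoolVar
  retTy : ClassId × List PoolVar
  pools : List (VarId × LayoutId × List PoolVar)
  locals : List (VarId × ClassId × List PoolVar)
  body : Expr

structure ClassDecl where
  params : List (VarId × ClassId × List PoolVar)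
  fields : List (FieldId × ClassId × List PoolVar)
  methods : List MethodDecl

structure LayoutDecl where
  cls : ClassId
  clusters : List (List FieldId)

structure Program where
  classes : ClassId → Option ClassDecl
  layouts : LayoutId → Option LayoutDecl

def owners (cd : ClassDecl) : List VarId := cd.params.map (·.1)

def layoutClass (P : Program) (L : LayoutId) : Option ClassId :=
  (P.layouts L).map (·.cls)

def flookup (cd : ClassDecl) (f : FieldId) : Option (ClassId × List PoolVar) :=
  (cd.fields.find? (fun p => p.1 == f)).map (·.2)

def fieldsOf (cd : ClassDecl) : List FieldId := cd.fields.map (·.1)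

def mlookup (cd : ClassDecl) (m : MethodId) : Option MethodDecl := cd.methods[m]?

/-- Offset of a field in an unpooled object. -/
def offsetC (cd : ClassDecl) (f : FieldId) : Option ℕ :=
  (fieldsOf cd).idxOf? f

/-- Offset `(i, j)` of a field in a layout: cluster index `i`, position `j`. -/
def offsetL (ld : LayoutDecl) (f : FieldId) : Option (ℕ × ℕ) :=
  (ld.clusters.findIdx? (fun κ => κ.contains f)).bind fun i =>
    ((ld.clusters.getD i []).idxOf? f).map fun j => (i, j)

/-- Substitution of formal pool parameters by pool addresses. -/
def substPA (formals : List VarId) (πs : List PoolAddr) : PoolVar → PoolAddr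
  | none => none
  | some y => match formals.idxOf? y with
    | some i => πs.getD i none
    | none => none

/-- Substitution of formal pool parameters by pool variables (actuals). -/
def substPV (formals : List VarId) (actuals : List PoolVar) : PoolVar → PoolVar
  | none => none
  | some y => match formals.idxOf? y with
    | some i => actuals.getD i none
    | none => none

/-- Weak agreement of a value with a runtime class type `C<πs>`. -/
def wagreeVal (P : Program) (X : Heap) : Value → ClassId → List PoolAddr → Prop
  | .null, _, _ => True
  | .obj ω, C, πs => ∃ o, X ω = some (.inl o) ∧ o.cls = C ∧ o.params = πs ∧
      πs.head? ≠ some none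
  | .loc π _, C, πs => ∃ p, X π = some (.inr p) ∧ p.params = πs ∧
      πs.head? = some (some π) ∧ layoutClass P p.layout = some C

/-- Weak agreement of a pool address with a runtime bound `[C<πs>]`. -/
def wagreeBound (P : Program) (X : Heap) : PoolAddr → ClassId → List PoolAddr → Prop
  | none, _, _ => True
  | some π, C, πs => ∃ p, X π = some (.inr p) ∧ p.params = πs ∧
      πs.head? = some (some π) ∧ layoutClass P p.layout = some C

/-- Weak agreement of a pool address with a runtime pool type `L<πs>`. -/
def wagreePoolTy (P : Program) (X : Heap) (_π : PoolAddr) (L : LayoutId)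
    (πs : List PoolAddr) : Prop :=
  ∃ π₀ p, πs.head? = some (some π₀) ∧ X π₀ = some (.inr p) ∧ p.layout = L ∧ p.params = πs

def paramsAgree (P : Program) (X : Heap) (cd : ClassDecl) (πs : List PoolAddr) : Prop :=
  ∀ i (h : i < cd.params.length),
    wagreeBound P X (πs.getD i none)
      (cd.params.get ⟨i, h⟩).2.1
      ((cd.params.get ⟨i, h⟩).2.2.map (substPA (owners cd) πs))

def fieldsAgreeRec (P : Program) (X : Heap) (cd : ClassDecl) (πs : List PoolAddr)
    (ρ : List Value) : Prop :=
  ∀ i (h : i < cd.fields.length),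
    wagreeVal P X (ρ.getD i .null)
      (cd.fields.get ⟨i, h⟩).2.1
      ((cd.fields.get ⟨i, h⟩).2.2.map (substPA (owners cd) πs))

/-- The value at cluster `i`, object index `n`, slot `j`. -/
def cluster3 (κs : List (List (List Value))) (i n j : ℕ) : Value :=
  ((κs.getD i []).getD n []).getD j .null

/-- Strong agreement of the pooled object at `(π, n)` with `C<πs>`. -/
def sagreeLoc (P : Program) (X : Heap) (π n : ℕ) (C : ClassId) (πs : List PoolAddr) : Prop :=
  ∃ p cd ld, X π = some (.inr p) ∧ p.params = πs ∧ πs.head? = some (some π) ∧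
    P.layouts p.layout = some ld ∧ ld.cls = C ∧ P.classes C = some cd ∧
    ∀ f i j D zs, offsetL ld f = some (i, j) → flookup cd f = some (D, zs) →
      wagreeVal P X (cluster3 p.clusters i n j) D (zs.map (substPA (owners cd) πs))

/-- Strong agreement of the unpooled object at `ω` with `C<πs>`. -/
def sagreeObjAddr (P : Program) (X : Heap) (ω : ℕ) (C : ClassId) (πs : List PoolAddr) : Prop :=
  ∃ o cd, X ω = some (.inl o) ∧ o.cls = C ∧ o.params = πs ∧ πs.head? = some none ∧
    P.classes C = some cd ∧ paramsAgree P X cd πs ∧ fieldsAgreeRec P X cd πs o.record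

/-- Strong agreement of the pool at `π` with `L<πs>`. -/
def sagreePoolAddr (P : Program) (X : Heap) (π : ℕ) (L : LayoutId) (πs : List PoolAddr) : Prop :=
  ∃ p ld cd, X π = some (.inr p) ∧ p.layout = L ∧ p.params = πs ∧
    πs.head? = some (some π) ∧
    P.layouts L = some ld ∧ P.classes ld.cls = some cd ∧
    paramsAgree P X cd πs ∧
    (∀ κ ∈ p.clusters, κ.length = (p.clusters.headD []).length) ∧
    (∀ n, n < (p.clusters.headD []).length → sagreeLoc P X π n ld.cls πs)

/-- A well-formed heap: every address strongly agrees with some runtime type. -/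
def wfHeap (P : Program) (X : Heap) : Prop :=
  ∀ a e, X a = some e →
    (∃ C πs, sagreeObjAddr P X a C πs) ∨ (∃ L πs, sagreePoolAddr P X a L πs)

inductive Ty where
  | obj (C : ClassId) (ys : List PoolVar)
  | pool (L : LayoutId) (ys : List PoolVar)
  | bound (C : ClassId) (ys : List PoolVar)
deriving DecidableEq

abbrev Ctx := VarId → Option Ty

mutual
/-- Well-formedness of the bound `[C<ys>]` in a context. -/
inductive WfBound (P : Program) (Γ : Ctx) : ClassId → List PoolVar → Prop where
  | mk : ∀ C ys cd, P.classes C = some cd →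
      (∀ i (h : i < cd.params.length),
        PoolBoundTy P Γ (ys.getD i none)
          (cd.params.get ⟨i, h⟩).2.1
          ((cd.params.get ⟨i, h⟩).2.2.map (substPV (owners cd) ys))) →
      WfBound P Γ C ys

/-- A pool variable has a given bound type. -/
inductive PoolBoundTy (P : Program) (Γ : Ctx) : PoolVar → ClassId → List PoolVar → Prop where
  | noneB : ∀ C ys, WfBound P Γ C ys → PoolBoundTy P Γ none C ys
  | fromBound : ∀ v C ys, Γ v = some (.bound C ys) → PoolBoundTy P Γ (some v) C ys
  | fromPool : ∀ v L C ys, Γ v = some (.pool L ys) → layoutClass P L = some C →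
      PoolBoundTy P Γ (some v) C ys
end

def WfObjTy (P : Program) (Γ : Ctx) (C : ClassId) (ys : List PoolVar) : Prop :=
  WfBound P Γ C ys

def WfPoolTy (P : Program) (Γ : Ctx) (L : LayoutId) (ys : List PoolVar) : Prop :=
  ∃ C, WfBound P Γ C ys ∧ layoutClass P L = some C

/-- Expression typing: `Γ ⊢ e : C<ys>`. -/
inductive HasTy (P : Program) (Γ : Ctx) : Expr → ClassId → List PoolVar → Prop where
  | null : ∀ C ys, WfBound P Γ C ys → HasTy P Γ .null C ys
  | var : ∀ x C ys, Γ x = some (.obj C ys) → HasTy P Γ (.var x) C ys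
  | assign : ∀ x e C ys, Γ x = some (.obj C ys) → HasTy P Γ e C ys →
      HasTy P Γ (.assign x e) C ys
  | newE : ∀ C ys, WfBound P Γ C ys → HasTy P Γ (.newE C ys) C ys
  | read : ∀ x f C ys cd D zs, Γ x = some (.obj C ys) → P.classes C = some cd →
      flookup cd f = some (D, zs) →
      HasTy P Γ (.read x f) D (zs.map (substPV (owners cd) ys))
  | write : ∀ x f x' C ys cd D zs, Γ x = some (.obj C ys) → P.classes C = some cd →
      flookup cd f = some (D, zs) →
      Γ x' = some (.obj D (zs.map (substPV (owners cd) ys))) →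
      HasTy P Γ (.write x f x') D (zs.map (substPV (owners cd) ys))
  | call : ∀ x m x' C ys cd md, Γ x = some (.obj C ys) → P.classes C = some cd →
      mlookup cd m = some md →
      Γ x' = some (.obj md.paramTy.1 (md.paramTy.2.map (substPV (owners cd) ys))) →
      HasTy P Γ (.call x m x') md.retTy.1 (md.retTy.2.map (substPV (owners cd) ys))

/-- A run-time value agrees with a (static) type instantiated via the frame. -/
def agreeTy (P : Program) (X : Heap) (Φ : Frame) (r : RVal) : Ty → Prop
  | .obj C ys => ∃ v πs, r = .val v ∧ ys.mapM (poolOf Φ) = some πs ∧ wagreeVal P X v C πs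
  | .pool L ys => ∃ π πs, r = .pool π ∧ ys.mapM (poolOf Φ) = some πs ∧
      wagreePoolTy P X π L πs
  | .bound C ys => ∃ π πs, r = .pool π ∧ ys.mapM (poolOf Φ) = some πs ∧
      wagreeBound P X π C πs

/-- Well-formed configuration `Γ ⊢ X, Φ`. -/
def wfConfig (P : Program) (Γ : Ctx) (X : Heap) (Φ : Frame) : Prop :=
  wfHeap P X ∧ (∀ x, (Γ x).isSome ↔ (Φ x).isSome) ∧
  ∀ x T, Γ x = some T → ∃ r, Φ x = some r ∧ agreeTy P X Φ r T

def updHeap (X : Heap) (a : ℕ) (e : Obj ⊕ Pool) : Heap :=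
  fun b => if b = a then some e else X b

def updFrame (Φ : Frame) (x : VarId) (r : RVal) : Frame :=
  fun z => if z = x then some r else Φ z

def updCtx (Γ : Ctx) (x : VarId) (T : Ty) : Ctx :=
  fun z => if z = x then some T else Γ z

/-- `this` is a distinguished variable. -/
def thisVar : VarId := 0

/-- Append one fresh record of nulls to each cluster (pooled allocation). -/
def appendNulls (κs : List (List (List Value))) (fss : List (List FieldId)) :
    List (List (List Value)) :=
  List.zipWith (fun κ fs => κ ++ [List.replicate fs.length Value.null]) κs fss

/-- Update slot `(i, n, j)` in the clusters of a pool. -/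
def setCluster (κs : List (List (List Value))) (i n j : ℕ) (v : Value) :
    List (List (List Value)) :=
  κs.set i ((κs.getD i []).set n (((κs.getD i []).getD n []).set j v))

def getThis (P : Program) (X : Heap) : Value → Option (ClassId × List PoolAddr)
  | .obj ω => (X ω).bind fun e => match e with
      | .inl o => some (o.cls, o.params)
      | .inr _ => none
  | .loc π _ => (X π).bind fun e => match e with
      | .inr p => (layoutClass P p.layout).map fun C => (C, p.params)
      | .inl _ => none
  | .null => none

/-- The frame a method starts with: `this`, the parameter, and the class pool params. -/
def methodFrame (md : MethodDecl) (thisv : Value) (arg : RVal)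
    (ownersC : List VarId) (πs : List PoolAddr) : Frame :=
  fun z =>
    if z = thisVar then some (.val thisv)
    else if z = md.param then some arg
    else match ownersC.idxOf? z with
      | some i => some (.pool (πs.getD i none))
      | none => none

/-- Extend a method frame with its local pool and object variables. -/
def extendDecls (Φ : Frame) (πas : List ℕ) (md : MethodDecl) : Frame :=
  fun z =>
    match (md.pools.map (·.1)).idxOf? z with
    | some i => some (.pool (some (πas.getD i 0)))
    | none => match (md.locals.map (·.1)).idxOf? z with
      | some _ => some (.val .null)
      | none => Φ z

/-- Big-step operational semantics of SHAPES. -/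
inductive Red (P : Program) : Heap → Frame → Expr → Heap → Frame → Value → Prop where
  | nullR : ∀ X Φ, Red P X Φ .null X Φ .null
  | varR : ∀ X Φ x v, Φ x = some (.val v) → Red P X Φ (.var x) X Φ v
  | assignR : ∀ X Φ x e X' Φ' v, Red P X Φ e X' Φ' v →
      Red P X Φ (.assign x e) X' (updFrame Φ' x (.val v)) v
  | newObjR : ∀ X Φ C ys πs ω cd,
      ys.mapM (poolOf Φ) = some πs → πs.head? = some none →
      X ω = none → P.classes C = some cd →
      Red P X Φ (.newE C ys)
        (updHeap X ω (.inl ⟨C, πs, List.replicate cd.fields.length .null⟩)) Φ (.obj ω)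
  | newPoolR : ∀ X Φ C ys πs π p ld,
      ys.mapM (poolOf Φ) = some πs → πs.head? = some (some π) →
      X π = some (.inr p) → P.layouts p.layout = some ld →
      Red P X Φ (.newE C ys)
        (updHeap X π (.inr ⟨p.layout, p.params, appendNulls p.clusters ld.clusters⟩))
        Φ (.loc π (p.clusters.headD []).length)
  | readObjR : ∀ X Φ x f ω o cd i,
      Φ x = some (.val (.obj ω)) → X ω = some (.inl o) →
      P.classes o.cls = some cd → offsetC cd f = some i →
      Red P X Φ (.read x f) X Φ (o.record.getD i .null)
  | readPoolR : ∀ X Φ x f π n p ld i j,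
      Φ x = some (.val (.loc π n)) → X π = some (.inr p) →
      P.layouts p.layout = some ld → offsetL ld f = some (i, j) →
      Red P X Φ (.read x f) X Φ (cluster3 p.clusters i n j)
  | writeObjR : ∀ X Φ x f x' ω o cd i v,
      Φ x = some (.val (.obj ω)) → Φ x' = some (.val v) →
      X ω = some (.inl o) → P.classes o.cls = some cd → offsetC cd f = some i →
      Red P X Φ (.write x f x')
        (updHeap X ω (.inl ⟨o.cls, o.params, o.record.set i v⟩)) Φ v
  | writePoolR : ∀ X Φ x f x' π n p ld i j v,
      Φ x = some (.val (.loc π n)) → Φ x' = some (.val v) →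
      X π = some (.inr p) → P.layouts p.layout = some ld → offsetL ld f = some (i, j) →
      Red P X Φ (.write x f x')
        (updHeap X π (.inr ⟨p.layout, p.params, setCluster p.clusters i n j v⟩)) Φ v
  | callR : ∀ X Φ x m x'' v arg C πs cd md Φ₀ πas Φ₁ (X₁ : Heap) X' Φ' v',
      Φ x = some (.val v) →
      getThis P X v = some (C, πs) →
      P.classes C = some cd → mlookup cd m = some md →
      Φ x'' = some arg →
      Φ₀ = methodFrame md v arg (owners cd) πs →
      πas.length = md.pools.length → πas.Nodup →
      (∀ π ∈ πas, X π = none) →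
      Φ₁ = extendDecls Φ₀ πas md →
      (∀ i (h : i < md.pools.length),
        ∃ ld πs', P.layouts (md.pools.get ⟨i, h⟩).2.1 = some ld ∧
          ((md.pools.get ⟨i, h⟩).2.2).mapM (poolOf Φ₁) = some πs' ∧
          X₁ (πas.getD i 0) = some (.inr ⟨(md.pools.get ⟨i, h⟩).2.1, πs',
            List.replicate ld.clusters.length []⟩)) →
      (∀ a, a ∉ πas → X₁ a = X a) →
      Red P X₁ Φ₁ md.body X' Φ' v' →
      Red P X Φ (.call x m x'') X' Φ v'

/-- The typing context arising from a class's pool parameter declarations. -/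
def ctxOfClass (cd : ClassDecl) : Ctx :=
  fun z => (cd.params.find? (fun p => p.1 == z)).map fun p => Ty.bound p.2.1 p.2.2

/-- The typing context used to check a method body. -/
def ctxOfMethod (C : ClassId) (cd : ClassDecl) (md : MethodDecl) : Ctx :=
  fun z =>
    if z = thisVar then some (.obj C (cd.params.map fun p => some p.1))
    else if z = md.param then some (.obj md.paramTy.1 md.paramTy.2)
    else match md.pools.find? (fun p => p.1 == z) with
    | some p => some (.pool p.2.1 p.2.2)
    | none => match md.locals.find? (fun l => l.1 == z) with
      | some l => some (.obj l.2.1 l.2.2)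
      | none => ctxOfClass cd z

/-- A layout declaration is well-formed for a class: its clusters are a
disjoint partition of the class's fields. -/
def wfLayoutDecl (cd : ClassDecl) (ld : LayoutDecl) : Prop :=
  ld.clusters.flatten.Perm (fieldsOf cd) ∧ ∀ κ ∈ ld.clusters, κ.Nodup

def wfClassDecl (P : Program) (C : ClassId) (cd : ClassDecl) : Prop :=
  WfBound P (ctxOfClass cd) C (cd.params.map fun p => some p.1) ∧
  (∀ fd ∈ cd.fields, WfObjTy P (ctxOfClass cd) fd.2.1 fd.2.2) ∧
  ∀ md ∈ cd.methods,
    WfObjTy P (ctxOfClass cd) md.paramTy.1 md.paramTy.2 ∧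
    WfObjTy P (ctxOfClass cd) md.retTy.1 md.retTy.2 ∧
    HasTy P (ctxOfMethod C cd md) md.body md.retTy.1 md.retTy.2

def wfProgram (P : Program) : Prop :=
  (∀ C cd, P.classes C = some cd → wfClassDecl P C cd) ∧
  (∀ L ld, P.layouts L = some ld →
    ∃ cd, P.classes ld.cls = some cd ∧ wfLayoutDecl cd ld)


/-!
Replacing the clusters of the pool at `π` while keeping its layout and parameters changes nothing
that weak agreement inspects, so every other heap entry keeps strongly agreeing. In the pool
itself, the old records keep their values and the appended record holds only nulls, which
weakly agree with any class type, so it strongly agrees as the new last location.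
-/

lemma length_headD_of_mem {α : Type*} {l : List (List α)} {k : ℕ} (h : ∀ x ∈ l, x.length = k)
    {x : List α} (hx : x ∈ l) : (l.headD []).length = k := by
  cases l with
  | nil => simp at hx
  | cons y _ => exact h y List.mem_cons_self

lemma length_headD_le {α : Type*} {l : List (List α)} {k : ℕ} (h : ∀ x ∈ l, x.length = k) :
    (l.headD []).length ≤ k := by
  cases l with
  | nil => simp
  | cons y _ => exact (h y List.mem_cons_self).le

lemma length_of_mem_appendNulls {κs : List (List (List Value))} {fss : List (List FieldId)}
    {m : ℕ} (hm : ∀ κ ∈ κs, κ.length = m) {κ : List (List Value)}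
    (hκ : κ ∈ appendNulls κs fss) : κ.length = m + 1 := by
  obtain ⟨i, hi, rfl⟩ := List.mem_iff_getElem.1 hκ
  simp only [appendNulls, List.getElem_zipWith, List.length_append, List.length_singleton]
  rw [hm _ (List.getElem_mem _)]

lemma cluster3_of_forall_length_le {κs : List (List (List Value))} {n : ℕ}
    (hn : ∀ κ ∈ κs, κ.length ≤ n) (i j : ℕ) : cluster3 κs i n j = .null := by
  unfold cluster3
  rcases lt_or_ge i κs.length with hi | hi
  · rw [List.getD_eq_getElem _ _ hi, List.getD_eq_default _ _ (hn _ (List.getElem_mem hi))]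
    rfl
  · rw [List.getD_eq_default _ _ hi]
    rfl

-- `zipWith` drops clusters that have no field list; their slots read as `null`.
lemma cluster3_appendNulls (κs : List (List (List Value))) (fss : List (List FieldId))
    (i n j : ℕ) :
    cluster3 (appendNulls κs fss) i n j = cluster3 κs i n j ∨
      cluster3 (appendNulls κs fss) i n j = .null := by
  unfold cluster3
  rw [List.getD_eq_getElem?_getD (l := appendNulls κs fss), List.getD_eq_getElem?_getD (l := κs),
    appendNulls, List.getElem?_zipWith]
  rcases κs[i]? with _ | κ
  · exact .inr rfl
  rcases fss[i]? with _ | fs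
  · exact .inr rfl
  rcases lt_or_ge n κ.length with hn | hn
  · exact .inl (by simp only [Option.getD_some, List.getD_append _ _ _ _ hn])
  · right
    simp only [Option.getD_some, List.getD_append_right _ _ _ _ hn]
    cases n - κ.length <;> simp [List.getD_eq_getElem?_getD]

section ReplaceClusters

variable {P : Program} {X : Heap} {π : ℕ} {p : Pool} {κs : List (List (List Value))}

lemma updHeap_clusters_obj (hp : X π = some (.inr p)) {ω : ℕ} {o : Obj}
    (ho : X ω = some (.inl o)) :
    updHeap X π (.inr { p with clusters := κs }) ω = some (.inl o) := by
  have hne : ω ≠ π := by rintro rfl; simp [hp] at ho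
  simpa [updHeap, hne] using ho

lemma updHeap_clusters_pool (hp : X π = some (.inr p)) {π₁ : ℕ} {q : Pool}
    (hq : X π₁ = some (.inr q)) :
    ∃ q', updHeap X π (.inr { p with clusters := κs }) π₁ = some (.inr q') ∧
      q'.layout = q.layout ∧ q'.params = q.params := by
  by_cases hne : π₁ = π
  · subst hne
    obtain rfl : p = q := by simpa [hp] using hq
    exact ⟨{ p with clusters := κs }, by simp [updHeap], rfl, rfl⟩
  · exact ⟨q, by simpa [updHeap, hne] using hq, rfl, rfl⟩

lemma wagreeVal_updHeap_clusters (hp : X π = some (.inr p)) {v : Value} {C : ClassId}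
    {πs : List PoolAddr} (hw : wagreeVal P X v C πs) :
    wagreeVal P (updHeap X π (.inr { p with clusters := κs })) v C πs := by
  cases v with
  | null => trivial
  | obj ω =>
    obtain ⟨o, ho, hcls, hparams, hhd⟩ := hw
    exact ⟨o, updHeap_clusters_obj hp ho, hcls, hparams, hhd⟩
  | loc π₁ n =>
    obtain ⟨q, hq, hparams, hhd, hcls⟩ := hw
    obtain ⟨q', hq', hlayout, hparams'⟩ := updHeap_clusters_pool (κs := κs) hp hq
    exact ⟨q', hq', hparams'.trans hparams, hhd, hlayout ▸ hcls⟩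

lemma wagreeBound_updHeap_clusters (hp : X π = some (.inr p)) {π₁ : PoolAddr} {C : ClassId}
    {πs : List PoolAddr} (hw : wagreeBound P X π₁ C πs) :
    wagreeBound P (updHeap X π (.inr { p with clusters := κs })) π₁ C πs := by
  cases π₁ with
  | none => trivial
  -- a bound `[C<πs>]` on a pool address says the same as a location in that pool
  | some π₁ => exact wagreeVal_updHeap_clusters (v := .loc π₁ 0) hp hw

lemma paramsAgree_updHeap_clusters (hp : X π = some (.inr p)) {cd : ClassDecl}
    {πs : List PoolAddr} (hw : paramsAgree P X cd πs) :
    paramsAgree P (updHeap X π (.inr { p with clusters := κs })) cd πs :=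
  fun i hi => wagreeBound_updHeap_clusters hp (hw i hi)

lemma sagreeObjAddr_updHeap_clusters (hp : X π = some (.inr p)) {ω : ℕ} {C : ClassId}
    {πs : List PoolAddr} (hw : sagreeObjAddr P X ω C πs) :
    sagreeObjAddr P (updHeap X π (.inr { p with clusters := κs })) ω C πs := by
  obtain ⟨o, cd, ho, hcls, hparams, hhd, hcd, hpa, hfields⟩ := hw
  exact ⟨o, cd, updHeap_clusters_obj hp ho, hcls, hparams, hhd, hcd,
    paramsAgree_updHeap_clusters hp hpa,
    fun i hi => wagreeVal_updHeap_clusters hp (hfields i hi)⟩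

lemma sagreeLoc_updHeap_clusters_of_ne (hp : X π = some (.inr p)) {π₁ n : ℕ} (hne : π₁ ≠ π)
    {C : ClassId} {πs : List PoolAddr} (hw : sagreeLoc P X π₁ n C πs) :
    sagreeLoc P (updHeap X π (.inr { p with clusters := κs })) π₁ n C πs := by
  obtain ⟨q, cd, ld, hq, hparams, hhd, hld, hcls, hcd, hfields⟩ := hw
  exact ⟨q, cd, ld, by simpa [updHeap, hne] using hq, hparams, hhd, hld, hcls, hcd,
    fun f i j D zs hoff hf => wagreeVal_updHeap_clusters hp (hfields f i j D zs hoff hf)⟩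

lemma sagreePoolAddr_updHeap_clusters_of_ne (hp : X π = some (.inr p)) {π₁ : ℕ}
    (hne : π₁ ≠ π) {L : LayoutId} {πs : List PoolAddr} (hw : sagreePoolAddr P X π₁ L πs) :
    sagreePoolAddr P (updHeap X π (.inr { p with clusters := κs })) π₁ L πs := by
  obtain ⟨q, ld, cd, hq, hL, hparams, hhd, hld, hcd, hpa, hlen, hlocs⟩ := hw
  exact ⟨q, ld, cd, by simpa [updHeap, hne] using hq, hL, hparams, hhd, hld, hcd,
    paramsAgree_updHeap_clusters hp hpa, hlen,
    fun n hn => sagreeLoc_updHeap_clusters_of_ne hp hne (hlocs n hn)⟩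

lemma wfHeap_updHeap_clusters (hp : X π = some (.inr p)) (hwf : wfHeap P X)
    {L : LayoutId} {πs : List PoolAddr}
    (hπ : sagreePoolAddr P (updHeap X π (.inr { p with clusters := κs })) π L πs) :
    wfHeap P (updHeap X π (.inr { p with clusters := κs })) := by
  intro a e ha
  by_cases hne : a = π
  · exact .inr ⟨L, πs, hne ▸ hπ⟩
  · rw [updHeap, if_neg hne] at ha
    rcases hwf a e ha with ⟨C, πs, h⟩ | ⟨L, πs, h⟩
    · exact .inl ⟨C, πs, sagreeObjAddr_updHeap_clusters hp h⟩
    · exact .inr ⟨L, πs, sagreePoolAddr_updHeap_clusters_of_ne hp hne h⟩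

end ReplaceClusters

lemma sagreeLoc.wagreeVal_cluster3 {P : Program} {X : Heap} {π n : ℕ} {C : ClassId}
    {πs : List PoolAddr} (hloc : sagreeLoc P X π n C πs) {p : Pool} {ld : LayoutDecl}
    {cd : ClassDecl} (hp : X π = some (.inr p)) (hld : P.layouts p.layout = some ld)
    (hcd : P.classes C = some cd) {f : FieldId} {i j : ℕ} {D : ClassId} {zs : List PoolVar}
    (hoff : offsetL ld f = some (i, j)) (hf : flookup cd f = some (D, zs)) :
    wagreeVal P X (cluster3 p.clusters i n j) D (zs.map (substPA (owners cd) πs)) := by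
  obtain ⟨q, cd', ld', hq, -, -, hld', -, hcd', hfields⟩ := hloc
  obtain rfl : p = q := by simpa [hp] using hq
  obtain rfl : ld = ld' := by simpa [hld] using hld'
  obtain rfl : cd = cd' := by simpa [hcd] using hcd'
  exact hfields f i j D zs hoff hf

lemma sagreePoolAddr_updHeap_appendNulls {P : Program} {X : Heap} {π : ℕ} {p : Pool}
    {L : LayoutId} {πs : List PoolAddr} (hp : X π = some (.inr p))
    (hs : sagreePoolAddr P X π L πs) (fss : List (List FieldId)) :
    sagreePoolAddr P (updHeap X π (.inr { p with clusters := appendNulls p.clusters fss }))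
      π L πs := by
  obtain ⟨q, ld, cd, hq, rfl, hparams, hhd, hld, hcd, hpa, hlen, hlocs⟩ := hs
  obtain rfl : p = q := by simpa [hp] using hq
  set m := (p.clusters.headD []).length
  have hlen' : ∀ κ ∈ appendNulls p.clusters fss, κ.length = m + 1 :=
    fun κ hκ => length_of_mem_appendNulls hlen hκ
  let p' : Pool := { p with clusters := appendNulls p.clusters fss }
  have hp' : updHeap X π (.inr p') π = some (.inr p') := by simp [updHeap]
  refine ⟨p', ld, cd, hp', rfl, hparams, hhd, hld, hcd, paramsAgree_updHeap_clusters hp hpa,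
    ?_, fun n hn => ⟨p', cd, ld, hp', hparams, hhd, hld, rfl, hcd,
      fun f i j D zs hoff hf => ?_⟩⟩
  · exact fun κ hκ => (hlen' κ hκ).trans (length_headD_of_mem hlen' hκ).symm
  · apply wagreeVal_updHeap_clusters hp
    have hold : wagreeVal P X (cluster3 p.clusters i n j) D
        (zs.map (substPA (owners cd) πs)) := by
      rcases (Nat.lt_succ_iff_lt_or_eq.1 (hn.trans_le (length_headD_le hlen'))) with hn | rfl
      · exact (hlocs n hn).wagreeVal_cluster3 hp hld hcd hoff hf
      · rw [cluster3_of_forall_length_le (fun κ hκ => (hlen κ hκ).le)]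
        trivial
    rcases cluster3_appendNulls p.clusters fss i n j with h | h <;> rw [h]
    · exact hold
    · trivial

/-- Pooled allocation preservation: if `(Γ, X, Φ)` is well-formed,
`Φ(ys) = π·…` with `π ≠ none`, the pool at `π` strongly agrees with its
layout type, and layout `L` for class `C` has clusters `fs₀..fsₙ`, then the
heap obtained by appending `null^|fsᵢ|` to each cluster `κᵢ` is well-formed,
and the new location `(π, |κ₀|)` weakly agrees with `C<Φ(ys)>`. -/
theorem pooled_alloc_preservation (P : Program) (Γ : Ctx) (X X' : Heap)
    (Φ : Frame) (ys : List PoolVar) (πs : List PoolAddr) (π : ℕ)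
    (p : Pool) (ld : LayoutDecl) (C : ClassId)
    (hwf : wfConfig P Γ X Φ)
    (hπs : ys.mapM (poolOf Φ) = some πs)
    (hhd : πs.head? = some (some π))
    (hp : X π = some (.inr p))
    (hstrong : sagreePoolAddr P X π p.layout πs)
    (hld : P.layouts p.layout = some ld)
    (hC : ld.cls = C)
    (hX' : X' = updHeap X π
      (.inr ⟨p.layout, p.params, appendNulls p.clusters ld.clusters⟩)) :
    wfHeap P X' ∧ wagreeVal P X' (.loc π (p.clusters.headD []).length) C πs := by
  subst hC hX'
  have hparams : p.params = πs := by
    obtain ⟨q, -, -, hq, -, hparams, -⟩ := hstrong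
    obtain rfl : p = q := by simpa [hp] using hq
    exact hparams
  have hpool := sagreePoolAddr_updHeap_appendNulls hp hstrong ld.clusters
  exact ⟨wfHeap_updHeap_clusters hp hwf.1 hpool,
    { p with clusters := appendNulls p.clusters ld.clusters }, by simp [updHeap], hparams, hhd,
    by simp [layoutClass, hld]⟩

end Shapes
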